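/- Let F be a Minkowski norm on a finite-dimensional real inner product space E, and define the dual function F*(p) = sup{⟨p,v⟩ : v ∈ E, F(v) ≤ 1} (identifying the dual space with E via the inner product). Define the Legendre transform ℓ : E → E by ℓ(v) = (1/2)∇(F²)(v) for v ≠ 0 and ℓ(0) = 0. Then ℓ is a homeomorphism of E whose restriction to E∖{0} is a C^∞ diffeomorphism onto E∖{0}, one has F*(ℓ(v)) = F(v) for all v ∈ E, and F* is itself a Minkowski norm on E. -/

import Mathlib

open scoped RealInnerProductSpace
open Set

noncomputable section

variable {E : Type*} [NormedAddCommGroup E] [InnerProductSpace ℝ E] [FiniteDimensional ℝ E]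

/-- A Minkowski norm on a finite-dimensional real vector space: continuous, positive off
`0`, smooth off `0`, positively homogeneous, with positive definite second derivative
of its square away from `0`. -/
structure IsMinkowskiNorm (F : E → ℝ) : Prop where
  nonneg : ∀ v, 0 ≤ F v
  continuous : Continuous F
  pos : ∀ v : E, v ≠ 0 → 0 < F v
  smooth_off_zero : ContDiffOn ℝ (⊤ : ℕ∞) F {v : E | v ≠ 0}
  homogeneous : ∀ (c : ℝ), 0 < c → ∀ v, F (c • v) = c * F v
  pos_def : ∀ y : E, y ≠ 0 → ∀ u : E, u ≠ 0 →
    0 < iteratedFDeriv ℝ 2 (fun v => (F v) ^ 2) y ![u, u]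

/-- The dual function `F*(p) = sup {⟨p,v⟩ : F(v) ≤ 1}` (the dual space being identified
with `E` via the inner product). -/
def dualNorm (F : E → ℝ) (p : E) : ℝ :=
  sSup ((fun v => ⟪p, v⟫) '' {v : E | F v ≤ 1})

open Classical in
/-- The Legendre transform `ℓ(v) = ½ ∇(F²)(v)` for `v ≠ 0`, `ℓ(0) = 0`. -/
def legendre (F : E → ℝ) (v : E) : E :=
  if v = 0 then 0 else (1 / 2 : ℝ) • gradient (fun w => (F w) ^ 2) v

set_option linter.unusedSectionVars false

namespace MNAux

open Topology

variable {F : E → ℝ}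

lemma F0 (hF : IsMinkowskiNorm F) : F (0 : E) = 0 := by
  have h := hF.homogeneous 2 two_pos 0
  rw [smul_zero] at h; linarith

lemma sq_smooth (hF : IsMinkowskiNorm F) :
    ContDiffOn ℝ (⊤ : ℕ∞) (fun v => F v ^ 2) {v : E | v ≠ 0} :=
  hF.smooth_off_zero.pow 2

lemma exists_lb (hF : IsMinkowskiNorm F) : ∃ m : ℝ, 0 < m ∧ ∀ v : E, m * ‖v‖ ≤ F v := by
  by_cases hE : ∀ v : E, v = 0
  · exact ⟨1, one_pos, fun v => by rw [hE v, F0 hF, norm_zero, mul_zero]⟩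
  · push_neg at hE; obtain ⟨v₀, hv₀⟩ := hE
    have hsph : (Metric.sphere (0:E) 1).Nonempty :=
      ⟨‖v₀‖⁻¹ • v₀, by
        simp [norm_smul, inv_mul_cancel₀ (norm_ne_zero_iff.2 hv₀)]⟩
    obtain ⟨w, hw, hmin⟩ := (isCompact_sphere (0:E) 1).exists_isMinOn hsph
      hF.continuous.continuousOn
    have hw1 : ‖w‖ = 1 := by simpa using hw
    have hwne : w ≠ 0 := by intro h; rw [h, norm_zero] at hw1; norm_num at hw1
    refine ⟨F w, hF.pos w hwne, fun v => ?_⟩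
    rcases eq_or_ne v 0 with rfl | hv
    · simp [F0 hF]
    · have hnv : (0:ℝ) < ‖v‖ := norm_pos_iff.2 hv
      have h1 : F v = ‖v‖ * F (‖v‖⁻¹ • v) := by
        rw [← hF.homogeneous ‖v‖ hnv, smul_smul, mul_inv_cancel₀ (ne_of_gt hnv), one_smul]
      have hmem : ‖v‖⁻¹ • v ∈ Metric.sphere (0:E) 1 := by
        simp [norm_smul, inv_mul_cancel₀ (ne_of_gt hnv)]
      have h2 : F w ≤ F (‖v‖⁻¹ • v) := hmin hmem
      rw [h1]; nlinarith

lemma exists_ub (hF : IsMinkowskiNorm F) : ∃ M : ℝ, 0 < M ∧ ∀ v : E, F v ≤ M * ‖v‖ := by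
  by_cases hE : ∀ v : E, v = 0
  · exact ⟨1, one_pos, fun v => by rw [hE v, F0 hF, norm_zero, mul_zero]⟩
  · push_neg at hE; obtain ⟨v₀, hv₀⟩ := hE
    have hsph : (Metric.sphere (0:E) 1).Nonempty :=
      ⟨‖v₀‖⁻¹ • v₀, by
        simp [norm_smul, inv_mul_cancel₀ (norm_ne_zero_iff.2 hv₀)]⟩
    obtain ⟨w, hw, hmax⟩ := (isCompact_sphere (0:E) 1).exists_isMaxOn hsph
      hF.continuous.continuousOn
    have hw1 : ‖w‖ = 1 := by simpa using hw
    have hwne : w ≠ 0 := by intro h; rw [h, norm_zero] at hw1; norm_num at hw1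
    refine ⟨F w, hF.pos w hwne, fun v => ?_⟩
    rcases eq_or_ne v 0 with rfl | hv
    · simp [F0 hF]
    · have hnv : (0:ℝ) < ‖v‖ := norm_pos_iff.2 hv
      have h1 : F v = ‖v‖ * F (‖v‖⁻¹ • v) := by
        rw [← hF.homogeneous ‖v‖ hnv, smul_smul, mul_inv_cancel₀ (ne_of_gt hnv), one_smul]
      have hmem : ‖v‖⁻¹ • v ∈ Metric.sphere (0:E) 1 := by
        simp [norm_smul, inv_mul_cancel₀ (ne_of_gt hnv)]
      have h2 : F (‖v‖⁻¹ • v) ≤ F w := hmax hmem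
      rw [h1]; nlinarith






variable {F : E → ℝ}

lemma sq_contDiffAt (hF : IsMinkowskiNorm F) {v : E} (hv : v ≠ 0) :
    ContDiffAt ℝ (⊤ : ℕ∞) (fun v => F v ^ 2) v :=
  (sq_smooth hF).contDiffAt (isOpen_ne.mem_nhds hv)

lemma sq_hasFDerivAt (hF : IsMinkowskiNorm F) {v : E} (hv : v ≠ 0) :
    HasFDerivAt (fun v => F v ^ 2) (fderiv ℝ (fun v => F v ^ 2) v) v :=
  ((sq_contDiffAt hF hv).differentiableAt (by simp)).hasFDerivAt

lemma legendre_eq {v : E} (hv : v ≠ 0) :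
    legendre F v
      = (1/2 : ℝ) • (InnerProductSpace.toDual ℝ E).symm (fderiv ℝ (fun w => F w ^ 2) v) := by
  rw [legendre, if_neg hv]; rfl

lemma inner_legendre {v : E} (hv : v ≠ 0) (w : E) :
    ⟪legendre F v, w⟫ = (1/2 : ℝ) * fderiv ℝ (fun w => F w ^ 2) v w := by
  rw [legendre_eq hv, real_inner_smul_left, InnerProductSpace.toDual_symm_apply]

lemma fderiv_sq_homog (hF : IsMinkowskiNorm F) {v : E} (hv : v ≠ 0) {c : ℝ} (hc : 0 < c) :
    fderiv ℝ (fun w => F w ^ 2) (c • v) = c • fderiv ℝ (fun w => F w ^ 2) v := by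
  have hcv : c • v ≠ 0 := smul_ne_zero (ne_of_gt hc) hv
  have hsm : HasFDerivAt (fun x : E => c • x) (c • ContinuousLinearMap.id ℝ E) v := by
    exact ((ContinuousLinearMap.id ℝ E).hasFDerivAt (x := v)).const_smul c
  have h1 : HasFDerivAt (fun x : E => F (c • x) ^ 2)
      ((fderiv ℝ (fun w => F w ^ 2) (c • v)).comp (c • ContinuousLinearMap.id ℝ E)) v :=
    (sq_hasFDerivAt hF hcv).comp v hsm
  have h2 : HasFDerivAt (fun x : E => F (c • x) ^ 2)
      ((c ^ 2) • fderiv ℝ (fun w => F w ^ 2) v) v := by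
    have heq : (fun x : E => F (c • x) ^ 2) = fun x : E => (c ^ 2) • (F x ^ 2) := by
      funext x; rw [hF.homogeneous c hc, mul_pow]; simp [smul_eq_mul]
    rw [heq]
    exact (sq_hasFDerivAt hF hv).const_smul (c ^ 2)
  have h3 := h1.unique h2
  ext w
  have := congrArg (fun (L : E →L[ℝ] ℝ) => L w) h3
  simp only [ContinuousLinearMap.comp_apply, ContinuousLinearMap.smul_apply,
    ContinuousLinearMap.id_apply, smul_eq_mul] at this ⊢
  have hD := (fderiv ℝ (fun w => F w ^ 2) (c • v)).map_smul c w
  rw [hD] at this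
  have hc' : c ≠ 0 := ne_of_gt hc
  field_simp at this ⊢
  rw [smul_eq_mul] at this; apply mul_left_cancel₀ hc'; linear_combination this

lemma legendre_homog (hF : IsMinkowskiNorm F) {c : ℝ} (hc : 0 < c) (v : E) :
    legendre F (c • v) = c • legendre F v := by
  rcases eq_or_ne v 0 with rfl | hv
  · simp [legendre]
  · have hcv : c • v ≠ 0 := smul_ne_zero (ne_of_gt hc) hv
    rw [legendre_eq hcv, legendre_eq hv, fderiv_sq_homog hF hv hc, map_smul, smul_comm]

lemma euler (hF : IsMinkowskiNorm F) {v : E} (hv : v ≠ 0) :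
    fderiv ℝ (fun w => F w ^ 2) v v = 2 * F v ^ 2 := by
  have hs : HasDerivAt (fun t : ℝ => t • v) v 1 := by
    simpa using (hasDerivAt_id (1:ℝ)).smul_const v
  have h1 : HasDerivAt (fun t : ℝ => F (t • v) ^ 2) (fderiv ℝ (fun w => F w ^ 2) v v) 1 := by
    have h := (sq_hasFDerivAt hF (v := (1:ℝ) • v) (by simpa using hv)).comp_hasDerivAt 1 hs
    simpa [Function.comp_def] using h
  have h2 : HasDerivAt (fun t : ℝ => t ^ 2 * F v ^ 2) (2 * F v ^ 2) 1 := by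
    have := (hasDerivAt_pow 2 (1:ℝ)).mul_const (F v ^ 2)
    simpa using this
  have hev : (fun t : ℝ => t ^ 2 * F v ^ 2) =ᶠ[𝓝 (1:ℝ)] fun t => F (t • v) ^ 2 := by
    filter_upwards [Ioi_mem_nhds zero_lt_one] with t ht
    rw [hF.homogeneous t ht, mul_pow]
  exact h1.unique (h2.congr_of_eventuallyEq hev.symm)

lemma inner_legendre_self (hF : IsMinkowskiNorm F) {v : E} (hv : v ≠ 0) :
    ⟪legendre F v, v⟫ = F v ^ 2 := by
  rw [inner_legendre hv, euler hF hv]; ring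




lemma fderiv_sq_smooth (hF : IsMinkowskiNorm F) :
    ContDiffOn ℝ (⊤ : ℕ∞) (fderiv ℝ (fun v => F v ^ 2)) {v : E | v ≠ 0} :=
  (sq_smooth hF).fderiv_of_isOpen isOpen_ne (by simp)

lemma snd_hasFDerivAt (hF : IsMinkowskiNorm F) {v : E} (hv : v ≠ 0) :
    HasFDerivAt (fderiv ℝ (fun v => F v ^ 2))
      (fderiv ℝ (fderiv ℝ (fun v => F v ^ 2)) v) v :=
  (((fderiv_sq_smooth hF).contDiffAt (isOpen_ne.mem_nhds hv)).differentiableAt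
    (by simp)).hasFDerivAt

lemma snd_symm (hF : IsMinkowskiNorm F) {v : E} (hv : v ≠ 0) (u w : E) :
    fderiv ℝ (fderiv ℝ (fun v => F v ^ 2)) v u w
      = fderiv ℝ (fderiv ℝ (fun v => F v ^ 2)) v w u := by
  have hf : ∀ᶠ y in 𝓝 v, HasFDerivAt (fun v => F v ^ 2)
      (fderiv ℝ (fun v => F v ^ 2) y) y := by
    filter_upwards [isOpen_ne.mem_nhds hv] with y hy
    exact sq_hasFDerivAt hF hy
  exact second_derivative_symmetric_of_eventually hf (snd_hasFDerivAt hF hv) u w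

lemma snd_pos (hF : IsMinkowskiNorm F) {v : E} (hv : v ≠ 0) {u : E} (hu : u ≠ 0) :
    0 < fderiv ℝ (fderiv ℝ (fun v => F v ^ 2)) v u u := by
  have h := hF.pos_def v hv u hu
  rwa [iteratedFDeriv_two_apply] at h


lemma legendre_zero : legendre F (0 : E) = 0 := by simp [legendre]

lemma legendre_ne_zero (hF : IsMinkowskiNorm F) {v : E} (hv : v ≠ 0) :
    legendre F v ≠ 0 := by
  intro h
  have h1 := inner_legendre_self hF hv
  rw [h, inner_zero_left] at h1
  exact absurd h1.symm (ne_of_gt (pow_pos (hF.pos v hv) 2))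

lemma fund_core (hF : IsMinkowskiNorm F) {v w : E} (hv : v ≠ 0) (hw : w ≠ 0) (hvw : w ≠ v)
    (hneg : ∀ s : ℝ, 0 < s → w ≠ (-s) • v) :
    fderiv ℝ (fun x => F x ^ 2) v (w - v) < F w ^ 2 - F v ^ 2 := by
  set γ : ℝ → E := fun t => v + t • (w - v) with hγdef
  have hwv : w - v ≠ 0 := sub_ne_zero.2 hvw
  have hγ : ∀ t ∈ Icc (0:ℝ) 1, γ t ≠ 0 := by
    rintro t ⟨h0, h1⟩ hzero
    have ht0 : t ≠ 0 := by
      rintro rfl; simp [hγdef] at hzero; exact hv hzero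
    have ht1 : t ≠ 1 := by
      rintro rfl; simp [hγdef] at hzero; exact hw hzero
    have ht0' : 0 < t := lt_of_le_of_ne h0 (Ne.symm ht0)
    have ht1' : t < 1 := lt_of_le_of_ne h1 ht1
    have hw' : w = (-((1 - t)/t)) • v := by
      have h2 : t • w = (t - 1) • v := by
        have hz : v + t • (w - v) = 0 := hzero
        linear_combination (norm := module) hz
      have := congrArg (fun x => t⁻¹ • x) h2
      simp only [smul_smul, inv_mul_cancel₀ ht0, one_smul] at this
      rw [this]
      congr 1
      field_simp
      ring
    exact hneg ((1 - t)/t) (div_pos (by linarith) ht0') hw'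
  have hγcont : Continuous γ := by fun_prop
  have hγderiv : ∀ t : ℝ, HasDerivAt γ (w - v) t := fun t => by
    have h := ((hasDerivAt_id t).smul_const (w - v)).const_add v; rw [one_smul] at h; exact h
  set χ : ℝ → ℝ := fun t => fderiv ℝ (fun x => F x ^ 2) (γ t) (w - v) with hχdef
  have hχd : ∀ t : ℝ, γ t ≠ 0 →
      HasDerivAt χ (fderiv ℝ (fderiv ℝ (fun x => F x ^ 2)) (γ t) (w - v) (w - v)) t := by
    intro t ht
    have h1 : HasDerivAt (fun s => fderiv ℝ (fun x => F x ^ 2) (γ s))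
        (fderiv ℝ (fderiv ℝ (fun x => F x ^ 2)) (γ t) (w - v)) t :=
      (snd_hasFDerivAt hF ht).comp_hasDerivAt t (hγderiv t)
    have h2 := h1.clm_apply (hasDerivAt_const t (w - v))
    simpa only [map_zero, add_zero] using h2
  have hψd : ∀ t : ℝ, γ t ≠ 0 →
      HasDerivAt (fun s => F (γ s) ^ 2) (χ t) t := by
    intro t ht
    exact (sq_hasFDerivAt hF ht).comp_hasDerivAt t (hγderiv t)
  have hχcont : ContinuousOn χ (Icc 0 1) := by
    have h1 : ContinuousOn (fun t => fderiv ℝ (fun x => F x ^ 2) (γ t)) (Icc 0 1) :=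
      (fderiv_sq_smooth hF).continuousOn.comp hγcont.continuousOn hγ
    exact (ContinuousLinearMap.apply ℝ ℝ (w - v)).continuous.comp_continuousOn h1
  have hmono : StrictMonoOn χ (Icc 0 1) := by
    apply strictMonoOn_of_deriv_pos (convex_Icc 0 1) hχcont
    intro t ht
    rw [interior_Icc] at ht
    have hγt : γ t ≠ 0 := hγ t (Ioo_subset_Icc_self ht)
    rw [(hχd t hγt).deriv]
    exact snd_pos hF hγt hwv
  have hcont : ContinuousOn (fun s => F (γ s) ^ 2) (Icc 0 1) :=
    ((hF.continuous.comp hγcont).pow 2).continuousOn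
  obtain ⟨c, hc, hceq⟩ := exists_hasDerivAt_eq_slope (fun s => F (γ s) ^ 2) χ one_pos hcont
    (fun t ht => hψd t (hγ t (Ioo_subset_Icc_self ht)))
  have hγ0 : γ 0 = v := by simp [hγdef]
  have hγ1 : γ 1 = w := by simp [hγdef]
  have hχ0 : χ 0 = fderiv ℝ (fun x => F x ^ 2) v (w - v) := by rw [hχdef]; simp [hγ0]
  have hlt : χ 0 < χ c := hmono (left_mem_Icc.2 zero_le_one) (Ioo_subset_Icc_self hc) hc.1
  rw [hγ0, hγ1] at hceq
  rw [← hχ0]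
  calc χ 0 < χ c := hlt
    _ = F w ^ 2 - F v ^ 2 := by rw [hceq]; ring

lemma fund_strict (hF : IsMinkowskiNorm F) {v w : E} (hv : v ≠ 0) (hw : w ≠ 0)
    (hFeq : F w = F v) (hvw : w ≠ v) :
    ⟪legendre F v, w⟫ < F v ^ 2 := by
  by_cases hneg : ∃ s : ℝ, 0 < s ∧ w = (-s) • v
  · obtain ⟨s, hs, rfl⟩ := hneg
    rw [real_inner_smul_right, inner_legendre_self hF hv]
    have := pow_pos (hF.pos v hv) 2
    nlinarith
  · push_neg at hneg
    have h := fund_core hF hv hw hvw fun s hs => hneg s hs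
    rw [map_sub, euler hF hv, hFeq] at h
    have h2 := inner_legendre (F := F) hv w
    nlinarith [h2]

lemma fund_le (hF : IsMinkowskiNorm F) {v : E} (hv : v ≠ 0) (w : E) :
    ⟪legendre F v, w⟫ ≤ F v * F w := by
  rcases eq_or_ne w 0 with rfl | hw
  · rw [inner_zero_right, F0 hF, mul_zero]
  · have hFv := hF.pos v hv
    have hFw := hF.pos w hw
    set c : ℝ := F v / F w with hc
    have hcpos : 0 < c := div_pos hFv hFw
    have hFcw : F (c • w) = F v := by
      rw [hF.homogeneous c hcpos, hc]; field_simp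
    have key : ⟪legendre F v, c • w⟫ ≤ F v ^ 2 := by
      rcases eq_or_ne (c • w) v with heq | hne
      · rw [heq, inner_legendre_self hF hv]
      · exact le_of_lt (fund_strict hF hv (smul_ne_zero (ne_of_gt hcpos) hw) hFcw hne)
    rw [real_inner_smul_right] at key
    rw [hc] at key
    rw [div_mul_eq_mul_div, div_le_iff₀ hFw] at key
    nlinarith [key]

lemma legendre_inj (hF : IsMinkowskiNorm F) : Function.Injective (legendre F) := by
  intro v w h
  rcases eq_or_ne v 0 with rfl | hv
  · rcases eq_or_ne w 0 with rfl | hw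
    · rfl
    · rw [legendre_zero] at h
      exact absurd h.symm (legendre_ne_zero hF hw)
  · rcases eq_or_ne w 0 with rfl | hw
    · rw [legendre_zero] at h
      exact absurd h (legendre_ne_zero hF hv)
    · have hFv := hF.pos v hv
      have hFw := hF.pos w hw
      have h1 : ⟪legendre F w, v⟫ = F v ^ 2 := by rw [← h, inner_legendre_self hF hv]
      have h2 : ⟪legendre F v, w⟫ = F w ^ 2 := by rw [h, inner_legendre_self hF hw]
      have h3 := fund_le hF hw v
      have h4 := fund_le hF hv w
      rw [h1] at h3; rw [h2] at h4
      have hFeq : F v = F w := by nlinarith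
      by_contra hne
      have hlt := fund_strict hF hw hv hFeq fun hvw => hne hvw
      rw [h1] at hlt
      nlinarith

lemma dual_bddAbove (hF : IsMinkowskiNorm F) (p : E) :
    BddAbove ((fun v => ⟪p, v⟫) '' {v : E | F v ≤ 1}) := by
  obtain ⟨m, hm, hmle⟩ := exists_lb hF
  refine ⟨‖p‖ * m⁻¹, ?_⟩
  rintro x ⟨w, hw, rfl⟩
  have h1 : m * ‖w‖ ≤ 1 := le_trans (hmle w) hw
  have h2 : ‖w‖ ≤ m⁻¹ := by rw [← one_div, le_div_iff₀ hm]; nlinarith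
  calc ⟪p, w⟫ ≤ ‖p‖ * ‖w‖ := real_inner_le_norm p w
    _ ≤ ‖p‖ * m⁻¹ := mul_le_mul_of_nonneg_left h2 (norm_nonneg p)

lemma dual_set_nonempty (hF : IsMinkowskiNorm F) : ({v : E | F v ≤ 1}).Nonempty :=
  ⟨0, by simp [F0 hF]⟩

lemma dualNorm_legendre (hF : IsMinkowskiNorm F) (v : E) :
    dualNorm F (legendre F v) = F v := by
  rcases eq_or_ne v 0 with rfl | hv
  · rw [legendre_zero, F0 hF, dualNorm]
    have himg : (fun w => ⟪(0:E), w⟫) '' {v : E | F v ≤ 1} = {(0:ℝ)} := by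
      rw [show (fun w => ⟪(0:E), w⟫) = fun _ : E => (0:ℝ) from funext fun w => inner_zero_left w]
      exact (dual_set_nonempty hF).image_const 0
    rw [himg, csSup_singleton]
  · have hFv := hF.pos v hv
    rw [dualNorm]
    apply le_antisymm
    · refine csSup_le (⟨⟪legendre F v, (0:E)⟫, ⟨0, by simp [F0 hF], rfl⟩⟩ :
        Set.Nonempty ((fun w => ⟪legendre F v, w⟫) '' {v : E | F v ≤ 1})) ?_
      rintro x ⟨w, hw, rfl⟩
      calc ⟪legendre F v, w⟫ ≤ F v * F w := fund_le hF hv w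
        _ ≤ F v * 1 := mul_le_mul_of_nonneg_left hw (le_of_lt hFv)
        _ = F v := mul_one _
    · apply le_csSup (dual_bddAbove hF _)
      refine ⟨(F v)⁻¹ • v, ?_, ?_⟩
      · show F ((F v)⁻¹ • v) ≤ 1
        rw [hF.homogeneous _ (by positivity), inv_mul_cancel₀ (ne_of_gt hFv)]
      · show ⟪legendre F v, (F v)⁻¹ • v⟫ = F v
        rw [real_inner_smul_right, inner_legendre_self hF hv]
        field_simp

/-- The inverse of `toDual` as a genuinely `ℝ`-linear continuous map. -/
def sharpL (E : Type*) [NormedAddCommGroup E] [InnerProductSpace ℝ E] [CompleteSpace E] :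
    StrongDual ℝ E →L[ℝ] E :=
  { toFun := ((InnerProductSpace.toDual ℝ E).symm : StrongDual ℝ E → E),
    map_add' := fun x y => by simp,
    map_smul' := fun c x => by simp,
    cont := (InnerProductSpace.toDual ℝ E).symm.continuous }

lemma inner_sharpL {E : Type*} [NormedAddCommGroup E] [InnerProductSpace ℝ E] [CompleteSpace E]
    (φ : StrongDual ℝ E) (w : E) : ⟪sharpL E φ, w⟫ = φ w :=
  InnerProductSpace.toDual_symm_apply

/-- The derivative of the Legendre transform at `v ≠ 0`. -/
def Dleg (F : E → ℝ) (v : E) : E →L[ℝ] E :=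
  (1/2 : ℝ) • ((sharpL E).comp (fderiv ℝ (fderiv ℝ (fun w => F w ^ 2)) v))

lemma Dleg_inner (v u w : E) :
    ⟪Dleg F v u, w⟫ = (1/2 : ℝ) * fderiv ℝ (fderiv ℝ (fun w => F w ^ 2)) v u w := by
  simp only [Dleg, ContinuousLinearMap.smul_apply, ContinuousLinearMap.comp_apply,
    real_inner_smul_left]
  rw [inner_sharpL]

lemma Dleg_symm (hF : IsMinkowskiNorm F) {v : E} (hv : v ≠ 0) (u w : E) :
    ⟪Dleg F v u, w⟫ = ⟪u, Dleg F v w⟫ := by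
  rw [Dleg_inner, real_inner_comm, Dleg_inner, snd_symm hF hv]

lemma Dleg_pos (hF : IsMinkowskiNorm F) {v : E} (hv : v ≠ 0) {u : E} (hu : u ≠ 0) :
    0 < ⟪Dleg F v u, u⟫ := by
  rw [Dleg_inner]
  have := snd_pos hF hv hu
  linarith

lemma Dleg_hasFDerivAt (hF : IsMinkowskiNorm F) {v : E} (hv : v ≠ 0) :
    HasFDerivAt (legendre F) (Dleg F v) v := by
  have h1 : HasFDerivAt (fun x => sharpL E (fderiv ℝ (fun w => F w ^ 2) x))
      ((sharpL E).comp (fderiv ℝ (fderiv ℝ (fun w => F w ^ 2)) v)) v :=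
    (sharpL E).hasFDerivAt.comp v (snd_hasFDerivAt hF hv)
  have h2 := h1.const_smul (1/2 : ℝ)
  apply h2.congr_of_eventuallyEq
  filter_upwards [isOpen_ne.mem_nhds hv] with y hy
  rw [legendre_eq hy]; rfl

lemma Dleg_self (hF : IsMinkowskiNorm F) {v : E} (hv : v ≠ 0) :
    Dleg F v v = legendre F v := by
  have hs : HasDerivAt (fun t : ℝ => t • v) v 1 := by
    simpa using (hasDerivAt_id (1:ℝ)).smul_const v
  have h1 : HasDerivAt (fun t : ℝ => legendre F (t • v)) (Dleg F v v) 1 := by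
    have h := (Dleg_hasFDerivAt hF (v := (1:ℝ) • v) (by simpa using hv)).comp_hasDerivAt 1 hs
    simpa [Function.comp_def] using h
  have h2 : HasDerivAt (fun t : ℝ => t • legendre F v) (legendre F v) 1 := by
    simpa using (hasDerivAt_id (1:ℝ)).smul_const (legendre F v)
  have hev : (fun t : ℝ => t • legendre F v) =ᶠ[𝓝 (1:ℝ)] fun t => legendre F (t • v) := by
    filter_upwards [Ioi_mem_nhds zero_lt_one] with t ht
    rw [legendre_homog hF ht]
  exact h1.unique (h2.congr_of_eventuallyEq hev.symm)

lemma Dleg_injective (hF : IsMinkowskiNorm F) {v : E} (hv : v ≠ 0) :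
    Function.Injective (Dleg F v) := by
  intro a b hab
  by_contra hne
  have hsub : a - b ≠ 0 := sub_ne_zero.2 hne
  have h0 : Dleg F v (a - b) = 0 := by rw [map_sub, hab, sub_self]
  have := Dleg_pos hF hv hsub
  rw [h0, inner_zero_left] at this
  exact lt_irrefl _ this

lemma exists_Dleg_equiv (hF : IsMinkowskiNorm F) {v : E} (hv : v ≠ 0) :
    ∃ A : E ≃L[ℝ] E, (A : E →L[ℝ] E) = Dleg F v := by
  have hinj : Function.Injective (Dleg F v).toLinearMap := Dleg_injective hF hv
  have hsurj : Function.Surjective (Dleg F v).toLinearMap :=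
    (LinearMap.injective_iff_surjective).1 hinj
  let L : E ≃ₗ[ℝ] E := LinearEquiv.ofBijective (Dleg F v).toLinearMap ⟨hinj, hsurj⟩
  exact ⟨L.toContinuousLinearEquiv, by ext x; rfl⟩

lemma legendre_surj_ne (hF : IsMinkowskiNorm F) {p : E} (hp : p ≠ 0) :
    ∃ v : E, v ≠ 0 ∧ legendre F v = p := by
  obtain ⟨m, hm, hmle⟩ := exists_lb hF
  have hK : IsCompact {w : E | F w ≤ 1} := by
    apply Metric.isCompact_of_isClosed_isBounded
    · exact isClosed_le hF.continuous continuous_const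
    · apply Metric.isBounded_iff_subset_closedBall (0:E) |>.2
      refine ⟨m⁻¹, fun w hw => ?_⟩
      simp only [Metric.mem_closedBall, dist_zero_right]
      have h1 : m * ‖w‖ ≤ 1 := le_trans (hmle w) hw
      rw [← one_div, le_div_iff₀ hm]; nlinarith
  have hcont : ContinuousOn (fun w : E => ⟪p, w⟫) {w : E | F w ≤ 1} :=
    (continuous_const.inner continuous_id).continuousOn
  obtain ⟨w₀, hw₀K, hmax⟩ := hK.exists_isMaxOn (dual_set_nonempty hF) hcont
  have hFp : 0 < F p := hF.pos p hp
  have hval : 0 < ⟪p, w₀⟫ := by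
    have hmem : (F p)⁻¹ • p ∈ {w : E | F w ≤ 1} := by
      show F ((F p)⁻¹ • p) ≤ 1
      rw [hF.homogeneous _ (by positivity), inv_mul_cancel₀ (ne_of_gt hFp)]
    have := hmax hmem
    simp only [mem_setOf_eq] at this
    have h2 : ⟪p, (F p)⁻¹ • p⟫ ≤ ⟪p, w₀⟫ := this
    rw [real_inner_smul_right, real_inner_self_eq_norm_sq] at h2
    have hnp : 0 < ‖p‖ := norm_pos_iff.2 hp
    calc (0:ℝ) < (F p)⁻¹ * ‖p‖ ^ 2 := by positivity
      _ ≤ ⟪p, w₀⟫ := h2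
  have hw₀ : w₀ ≠ 0 := by
    rintro rfl; rw [inner_zero_right] at hval; exact lt_irrefl _ hval
  have hFw₀pos := hF.pos w₀ hw₀
  have hFw₀ : F w₀ = 1 := by
    refine le_antisymm hw₀K ?_
    by_contra hlt
    push_neg at hlt
    have hmem : (F w₀)⁻¹ • w₀ ∈ {w : E | F w ≤ 1} := by
      show F ((F w₀)⁻¹ • w₀) ≤ 1
      rw [hF.homogeneous _ (by positivity), inv_mul_cancel₀ (ne_of_gt hFw₀pos)]
    have h2 : ⟪p, (F w₀)⁻¹ • w₀⟫ ≤ ⟪p, w₀⟫ := hmax hmem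
    rw [real_inner_smul_right] at h2
    have hinv : 0 < (F w₀)⁻¹ := by positivity
    have hcan : F w₀ * (F w₀)⁻¹ = 1 := mul_inv_cancel₀ (ne_of_gt hFw₀pos)
    nlinarith
  -- Lagrange multipliers
  have hextr : IsLocalExtrOn (fun w => ⟪p, w⟫)
      {x : E | F x ^ 2 = F w₀ ^ 2} w₀ := by
    have hsub : {x : E | F x ^ 2 = F w₀ ^ 2} ⊆ {w : E | F w ≤ 1} := by
      intro x hx
      simp only [mem_setOf_eq, hFw₀, one_pow] at hx
      show F x ≤ 1
      nlinarith [hF.nonneg x]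
    exact ((hmax.on_subset hsub).localize).isExtr
  have hf' : HasStrictFDerivAt (fun w => F w ^ 2) (fderiv ℝ (fun w => F w ^ 2) w₀) w₀ :=
    (sq_contDiffAt hF hw₀).hasStrictFDerivAt (by simp)
  have hφ' : HasStrictFDerivAt (fun w => ⟪p, w⟫) (innerSL ℝ p) w₀ :=
    (innerSL ℝ p).hasStrictFDerivAt
  obtain ⟨a, b, hab, heq⟩ := hextr.exists_multipliers_of_hasStrictFDerivAt_1d hf' hφ'
  have happ : ∀ u : E, a * fderiv ℝ (fun w => F w ^ 2) w₀ u + b * ⟪p, u⟫ = 0 := by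
    intro u
    have := congrArg (fun (L : E →L[ℝ] ℝ) => L u) heq
    simpa [smul_eq_mul] using this
  have h0 := happ w₀
  rw [euler hF hw₀, hFw₀] at h0
  norm_num at h0
  have hb : b ≠ 0 := by
    rintro rfl
    have ha : a = 0 := by nlinarith
    exact hab (by simp [ha, Prod.ext_iff])
  have hc : ∀ u : E, ⟪(⟪p, w₀⟫ : ℝ) • legendre F w₀, u⟫ = ⟪p, u⟫ := by
    intro u
    have h1 := happ u
    rw [show fderiv ℝ (fun w => F w ^ 2) w₀ u = 2 * ⟪legendre F w₀, u⟫ by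
      rw [inner_legendre (F := F) hw₀ u]; ring] at h1
    rw [real_inner_smul_left]
    have ha : a = -(b * ⟪p, w₀⟫) / 2 := by linarith
    rw [ha] at h1
    have hz : b * (⟪p, u⟫ - ⟪p, w₀⟫ * ⟪legendre F w₀, u⟫) = 0 := by
      linear_combination h1
    have := (mul_eq_zero.1 hz).resolve_left hb
    linarith
  refine ⟨⟪p, w₀⟫ • w₀, smul_ne_zero (ne_of_gt hval) hw₀, ?_⟩
  rw [legendre_homog hF hval]
  exact ext_inner_right ℝ fun u => hc u

lemma legendre_contDiffOn (hF : IsMinkowskiNorm F) :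
    ContDiffOn ℝ (⊤ : ℕ∞) (legendre F) {v : E | v ≠ 0} := by
  have h1 : ContDiffOn ℝ (⊤ : ℕ∞)
      (fun x => (1/2:ℝ) • sharpL E (fderiv ℝ (fun w => F w ^ 2) x)) {v : E | v ≠ 0} :=
    ((sharpL E).contDiff.comp_contDiffOn (fderiv_sq_smooth hF)).const_smul _
  exact h1.congr fun x hx => by rw [legendre_eq hx]; rfl

lemma legendre_bij (hF : IsMinkowskiNorm F) : Function.Bijective (legendre F) := by
  refine ⟨legendre_inj hF, fun p => ?_⟩
  rcases eq_or_ne p 0 with rfl | hp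
  · exact ⟨0, legendre_zero⟩
  · obtain ⟨v, _, hv⟩ := legendre_surj_ne hF hp
    exact ⟨v, hv⟩

/-- The Legendre transform as an equivalence. -/
def legEquiv (F : E → ℝ) (hF : IsMinkowskiNorm F) : E ≃ E :=
  Equiv.ofBijective _ (legendre_bij hF)

lemma legEquiv_apply (hF : IsMinkowskiNorm F) (v : E) : legEquiv F hF v = legendre F v := rfl

lemma legEquiv_symm_legendre (hF : IsMinkowskiNorm F) (v : E) :
    (legEquiv F hF).symm (legendre F v) = v :=
  (legEquiv F hF).symm_apply_apply v

lemma legendre_legEquiv_symm (hF : IsMinkowskiNorm F) (p : E) :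
    legendre F ((legEquiv F hF).symm p) = p :=
  (legEquiv F hF).apply_symm_apply p

lemma legEquiv_symm_zero (hF : IsMinkowskiNorm F) : (legEquiv F hF).symm 0 = 0 := by
  have := legEquiv_symm_legendre hF (0 : E)
  rwa [legendre_zero] at this

lemma legEquiv_symm_ne_zero (hF : IsMinkowskiNorm F) {p : E} (hp : p ≠ 0) :
    (legEquiv F hF).symm p ≠ 0 := by
  intro h
  have := legendre_legEquiv_symm hF p
  rw [h, legendre_zero] at this
  exact hp this.symm

lemma norm_legendre_le (hF : IsMinkowskiNorm F) :
    ∃ C : ℝ, 0 < C ∧ ∀ v : E, ‖legendre F v‖ ≤ C * ‖v‖ := by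
  obtain ⟨M, hM, hMle⟩ := exists_ub hF
  refine ⟨M ^ 2, by positivity, fun v => ?_⟩
  rcases eq_or_ne v 0 with rfl | hv
  · simp [legendre_zero]
  rcases eq_or_ne (legendre F v) 0 with h0 | h0
  · rw [h0, norm_zero]; positivity
  · have h := fund_le hF hv (legendre F v)
    rw [real_inner_self_eq_norm_sq] at h
    have h1 : F v ≤ M * ‖v‖ := hMle v
    have h2 : F (legendre F v) ≤ M * ‖legendre F v‖ := hMle _
    have h3 : F v * F (legendre F v) ≤ (M * ‖v‖) * (M * ‖legendre F v‖) :=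
      mul_le_mul h1 h2 (hF.nonneg _) (by positivity)
    have h4 : (0:ℝ) < ‖legendre F v‖ := norm_pos_iff.2 h0
    nlinarith

lemma norm_legendre_ge (hF : IsMinkowskiNorm F) :
    ∃ c : ℝ, 0 < c ∧ ∀ v : E, c * ‖v‖ ≤ ‖legendre F v‖ := by
  obtain ⟨m, hm, hmle⟩ := exists_lb hF
  refine ⟨m ^ 2, by positivity, fun v => ?_⟩
  rcases eq_or_ne v 0 with rfl | hv
  · simp [legendre_zero]
  · have h1 : ⟪legendre F v, v⟫ = F v ^ 2 := inner_legendre_self hF hv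
    have h2 : ⟪legendre F v, v⟫ ≤ ‖legendre F v‖ * ‖v‖ := real_inner_le_norm _ _
    have h3 : m * ‖v‖ ≤ F v := hmle v
    have h4 : (0:ℝ) < ‖v‖ := norm_pos_iff.2 hv
    nlinarith [mul_le_mul h3 h3 (by positivity) (hF.nonneg v)]

lemma legendre_continuous (hF : IsMinkowskiNorm F) : Continuous (legendre F) := by
  rw [continuous_iff_continuousAt]
  intro v
  rcases eq_or_ne v 0 with rfl | hv
  · obtain ⟨C, hC, hCle⟩ := norm_legendre_le hF
    rw [ContinuousAt, legendre_zero]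
    apply squeeze_zero_norm hCle
    have : Filter.Tendsto (fun x : E => C * ‖x‖) (𝓝 0) (𝓝 (C * ‖(0:E)‖)) :=
      (continuous_const.mul continuous_norm).tendsto 0
    simpa using this
  · exact (legendre_contDiffOn hF).continuousOn.continuousAt (isOpen_ne.mem_nhds hv)

lemma legEquiv_symm_continuousAt_zero (hF : IsMinkowskiNorm F) :
    ContinuousAt ((legEquiv F hF).symm) 0 := by
  obtain ⟨c, hc, hcle⟩ := norm_legendre_ge hF
  rw [ContinuousAt, legEquiv_symm_zero hF]
  have hb : ∀ p : E, ‖(legEquiv F hF).symm p‖ ≤ c⁻¹ * ‖p‖ := by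
    intro p
    have h := hcle ((legEquiv F hF).symm p)
    rw [legendre_legEquiv_symm] at h
    rw [← one_div, mul_comm, ← div_eq_mul_one_div, le_div_iff₀ hc]
    linarith
  apply squeeze_zero_norm hb
  have : Filter.Tendsto (fun p : E => c⁻¹ * ‖p‖) (𝓝 0) (𝓝 (c⁻¹ * ‖(0:E)‖)) :=
    (continuous_const.mul continuous_norm).tendsto 0
  simpa using this

lemma legEquiv_symm_contDiffAt (hF : IsMinkowskiNorm F) {p : E} (hp : p ≠ 0) :
    ContDiffAt ℝ (⊤ : ℕ∞) ((legEquiv F hF).symm) p := by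
  set v := (legEquiv F hF).symm p with hvdef
  have hv : v ≠ 0 := legEquiv_symm_ne_zero hF hp
  have hpv : legendre F v = p := legendre_legEquiv_symm hF p
  obtain ⟨A, hA⟩ := exists_Dleg_equiv hF hv
  have hcd : ContDiffAt ℝ (⊤ : ℕ∞) (legendre F) v :=
    (legendre_contDiffOn hF).contDiffAt (isOpen_ne.mem_nhds hv)
  have hfd : HasFDerivAt (legendre F) (A : E →L[ℝ] E) v := by
    rw [hA]; exact Dleg_hasFDerivAt hF hv
  have hloc := hcd.to_localInverse (f' := A) hfd (by simp)
  have hev : ∀ᶠ q in 𝓝 (legendre F v),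
      legendre F (hcd.localInverse hfd (by simp) q) = q :=
    (hcd.hasStrictFDerivAt' hfd (by simp)).eventually_right_inverse
  have heq : ((legEquiv F hF).symm) =ᶠ[𝓝 (legendre F v)]
      (hcd.localInverse hfd (by simp)) := by
    filter_upwards [hev] with q hq
    apply legendre_inj hF
    rw [hq, legendre_legEquiv_symm]
  rw [← hpv]
  exact hloc.congr_of_eventuallyEq heq

lemma legEquiv_symm_hasFDerivAt (hF : IsMinkowskiNorm F) {p : E} (hp : p ≠ 0) :
    ∃ A : E ≃L[ℝ] E, (A : E →L[ℝ] E) = Dleg F ((legEquiv F hF).symm p) ∧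
      HasFDerivAt ((legEquiv F hF).symm) (A.symm : E →L[ℝ] E) p := by
  set v := (legEquiv F hF).symm p with hvdef
  have hv : v ≠ 0 := legEquiv_symm_ne_zero hF hp
  have hpv : legendre F v = p := legendre_legEquiv_symm hF p
  obtain ⟨A, hA⟩ := exists_Dleg_equiv hF hv
  have hcd : ContDiffAt ℝ (⊤ : ℕ∞) (legendre F) v :=
    (legendre_contDiffOn hF).contDiffAt (isOpen_ne.mem_nhds hv)
  have hfd : HasFDerivAt (legendre F) (A : E →L[ℝ] E) v := by
    rw [hA]; exact Dleg_hasFDerivAt hF hv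
  have hstrict := hcd.hasStrictFDerivAt' hfd (by simp)
  have hloc := hstrict.to_localInverse
  have hev : ∀ᶠ q in 𝓝 (legendre F v),
      legendre F (hstrict.localInverse (legendre F) A v q) = q :=
    hstrict.eventually_right_inverse
  have heq : (hstrict.localInverse (legendre F) A v) =ᶠ[𝓝 (legendre F v)]
      ((legEquiv F hF).symm) := by
    filter_upwards [hev] with q hq
    apply legendre_inj hF
    rw [hq, legendre_legEquiv_symm]
  refine ⟨A, hA, ?_⟩
  rw [← hpv]
  exact hloc.hasFDerivAt.congr_of_eventuallyEq heq.symm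

/-- `inner` as an `ℝ`-bilinear continuous map. -/
def innerL (E : Type*) [NormedAddCommGroup E] [InnerProductSpace ℝ E] :
    E →L[ℝ] E →L[ℝ] ℝ :=
  LinearMap.mkContinuous
    { toFun := fun x => innerSL ℝ x,
      map_add' := fun x y => by ext z; simp [inner_add_left],
      map_smul' := fun c x => by ext z; simp [inner_smul_left] }
    1 (fun x => by simp [innerSL_apply_norm])

lemma innerL_apply {E : Type*} [NormedAddCommGroup E] [InnerProductSpace ℝ E] (x y : E) :
    innerL E x y = ⟪x, y⟫ := rfl

lemma dualNorm_eq_comp (hF : IsMinkowskiNorm F) (p : E) :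
    dualNorm F p = F ((legEquiv F hF).symm p) := by
  conv_lhs => rw [← legendre_legEquiv_symm hF p]
  rw [dualNorm_legendre hF]

lemma legEquiv_symm_homog (hF : IsMinkowskiNorm F) {c : ℝ} (hc : 0 < c) (p : E) :
    (legEquiv F hF).symm (c • p) = c • (legEquiv F hF).symm p := by
  apply legendre_inj hF
  rw [legendre_legEquiv_symm, legendre_homog hF hc, legendre_legEquiv_symm]

lemma dual_hasFDerivAt (hF : IsMinkowskiNorm F) {p : E} (hp : p ≠ 0) :
    HasFDerivAt (fun q => dualNorm F q ^ 2)
      ((2:ℝ) • innerL E ((legEquiv F hF).symm p)) p := by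
  set v := (legEquiv F hF).symm p with hvdef
  have hv : v ≠ 0 := legEquiv_symm_ne_zero hF hp
  obtain ⟨A, hA, hinv⟩ := legEquiv_symm_hasFDerivAt hF hp
  have h1 : HasFDerivAt (fun q => F ((legEquiv F hF).symm q) ^ 2)
      ((fderiv ℝ (fun w => F w ^ 2) v).comp (A.symm : E →L[ℝ] E)) p :=
    by have h := (sq_hasFDerivAt hF hv).comp p hinv; exact h
  rw [← hvdef] at hA
  have hA' : ∀ x : E, A x = Dleg F v x := by
    intro x; rw [← hA]; rfl
  have heq : (fderiv ℝ (fun w => F w ^ 2) v).comp (A.symm : E →L[ℝ] E)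
      = (2:ℝ) • innerL E v := by
    ext u
    have e1 : fderiv ℝ (fun w => F w ^ 2) v (A.symm u) = 2 * ⟪legendre F v, A.symm u⟫ := by
      rw [inner_legendre (F := F) hv]; ring
    have e2 : ⟪legendre F v, A.symm u⟫ = ⟪v, u⟫ := by
      rw [← Dleg_self hF hv, Dleg_symm hF hv v (A.symm u), ← hA' (A.symm u),
        A.apply_symm_apply]
    simp only [ContinuousLinearMap.comp_apply, ContinuousLinearMap.smul_apply,
      ContinuousLinearEquiv.coe_coe, innerL_apply, smul_eq_mul]
    rw [e1, e2]
  have hfun : (fun q => dualNorm F q ^ 2) = fun q => F ((legEquiv F hF).symm q) ^ 2 := by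
    funext q; rw [dualNorm_eq_comp hF]
  rw [hfun, ← heq]
  exact h1

lemma dual_pos_def (hF : IsMinkowskiNorm F) {p : E} (hp : p ≠ 0) {u : E} (hu : u ≠ 0) :
    0 < iteratedFDeriv ℝ 2 (fun q => dualNorm F q ^ 2) p ![u, u] := by
  rw [iteratedFDeriv_two_apply]
  obtain ⟨A, hA, hinv⟩ := legEquiv_symm_hasFDerivAt hF hp
  have hev : (fderiv ℝ (fun q => dualNorm F q ^ 2))
      =ᶠ[𝓝 p] fun q => (2:ℝ) • innerL E ((legEquiv F hF).symm q) := by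
    filter_upwards [isOpen_ne.mem_nhds hp] with q hq
    exact (dual_hasFDerivAt hF hq).fderiv
  have h2 : HasFDerivAt (fun q => ((2:ℝ) • innerL E) ((legEquiv F hF).symm q))
      (((2:ℝ) • innerL E).comp (A.symm : E →L[ℝ] E)) p :=
    ((2:ℝ) • innerL E).hasFDerivAt.comp p hinv
  have h3 : fderiv ℝ (fderiv ℝ (fun q => dualNorm F q ^ 2)) p
      = ((2:ℝ) • innerL E).comp (A.symm : E →L[ℝ] E) := by
    rw [hev.fderiv_eq]
    exact h2.fderiv
  rw [h3]
  have hsimp : (((2:ℝ) • innerL E).comp (A.symm : E →L[ℝ] E)) (![u,u] 0) (![u,u] 1)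
      = 2 * ⟪A.symm u, u⟫ := by
    simp [innerL_apply]
  rw [hsimp]
  have hz : A.symm u ≠ 0 := by
    intro h
    have := A.symm.injective (a₁ := u) (a₂ := 0) (by rw [h, map_zero])
    exact hu this
  have hv : (legEquiv F hF).symm p ≠ 0 := legEquiv_symm_ne_zero hF hp
  have hpos : 0 < ⟪Dleg F ((legEquiv F hF).symm p) (A.symm u), A.symm u⟫ :=
    Dleg_pos hF hv hz
  have : ⟪A.symm u, u⟫ = ⟪Dleg F ((legEquiv F hF).symm p) (A.symm u), A.symm u⟫ := by
    calc ⟪A.symm u, u⟫ = ⟪u, A.symm u⟫ := real_inner_comm _ _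
      _ = ⟪A (A.symm u), A.symm u⟫ := by rw [A.apply_symm_apply]
      _ = ⟪Dleg F ((legEquiv F hF).symm p) (A.symm u), A.symm u⟫ := by
          rw [show A (A.symm u) = Dleg F ((legEquiv F hF).symm p) (A.symm u) from by
            rw [← hA]; rfl]
  linarith

lemma legEquiv_symm_continuous (hF : IsMinkowskiNorm F) :
    Continuous ((legEquiv F hF).symm) := by
  rw [continuous_iff_continuousAt]
  intro p
  rcases eq_or_ne p 0 with rfl | hp
  · exact legEquiv_symm_continuousAt_zero hF
  · exact (legEquiv_symm_contDiffAt hF hp).continuousAt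

lemma dual_isMinkowski (hF : IsMinkowskiNorm F) : IsMinkowskiNorm (dualNorm F) := by
  constructor
  · intro p
    rw [dualNorm_eq_comp hF]
    exact hF.nonneg _
  · have : (dualNorm F : E → ℝ) = fun p => F ((legEquiv F hF).symm p) := by
      funext p; exact dualNorm_eq_comp hF p
    rw [this]
    exact hF.continuous.comp (legEquiv_symm_continuous hF)
  · intro p hp
    rw [dualNorm_eq_comp hF]
    exact hF.pos _ (legEquiv_symm_ne_zero hF hp)
  · have h1 : ContDiffOn ℝ (⊤ : ℕ∞) (fun p => F ((legEquiv F hF).symm p)) {p : E | p ≠ 0} := by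
      apply hF.smooth_off_zero.comp
      · intro p hp
        exact (legEquiv_symm_contDiffAt hF hp).contDiffWithinAt
      · intro p hp
        exact legEquiv_symm_ne_zero hF hp
    exact h1.congr fun p hp => dualNorm_eq_comp hF p
  · intro c hc p
    rw [dualNorm_eq_comp hF, dualNorm_eq_comp hF, legEquiv_symm_homog hF hc,
      hF.homogeneous c hc]
  · intro p hp u hu
    exact dual_pos_def hF hp hu

end MNAux

open MNAux

/-- The Legendre transform of a Minkowski norm is a homeomorphism of `E` restricting to
a `C^∞` diffeomorphism of `E ∖ {0}` onto itself, it intertwines `F` and the dual norm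
`F*`, and `F*` is again a Minkowski norm. -/
theorem legendre_transform_of_minkowski_norm (F : E → ℝ) (hF : IsMinkowskiNorm F) :
    (∃ e : E ≃ₜ E, (∀ v, e v = legendre F v) ∧
      legendre F '' {v : E | v ≠ 0} = {p : E | p ≠ 0} ∧
      ContDiffOn ℝ (⊤ : ℕ∞) (legendre F) {v : E | v ≠ 0} ∧
      ContDiffOn ℝ (⊤ : ℕ∞) (⇑e.symm) {p : E | p ≠ 0}) ∧
    (∀ v, dualNorm F (legendre F v) = F v) ∧
    IsMinkowskiNorm (dualNorm F) := by
  refine ⟨⟨{ toEquiv := legEquiv F hF,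
             continuous_toFun := legendre_continuous hF,
             continuous_invFun := legEquiv_symm_continuous hF }, ?_, ?_, ?_, ?_⟩, ?_, ?_⟩
  · intro v; rfl
  · ext p
    constructor
    · rintro ⟨v, hv, rfl⟩
      exact legendre_ne_zero hF hv
    · intro hp
      obtain ⟨v, hv, hvp⟩ := legendre_surj_ne hF hp
      exact ⟨v, hv, hvp⟩
  · exact legendre_contDiffOn hF
  · intro p hp
    exact (legEquiv_symm_contDiffAt hF hp).contDiffWithinAt
  · exact dualNorm_legendre hF
  · exact dual_isMinkowski hF
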